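/- arXiv:1605.03450 — 12 statements merged into one kernel-verified Lean document; each statement's English description precedes it below -/
import Mathlib

section
/- Let O be a discrete valuation ring of characteristic zero with maximal ideal 𝔪, let l be a prime number lying in 𝔪, and suppose the principal ideal (l) of O equals 𝔪^e for some integer e ≥ 1 with l > e + 1. Then for every n ≥ 1, every element of finite order in the kernel of the entrywise reduction map GL_n(O) → GL_n(O/𝔪) is the identity; that is, if A ∈ GL_n(O) satisfies A ≡ 1 (mod 𝔪) entrywise and A^m = 1 for some m ≥ 1, then A = 1. Consequently every finite subgroup of GL_n(O) maps injectively into GL_n(O/𝔪). -/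
open Matrix

lemma matrix_pow_entry_dvd {O : Type*} [CommRing O] {n : ℕ} (d : O)
    (M : Matrix (Fin n) (Fin n) O) (h : ∀ i j, d ∣ M i j) :
    ∀ t : ℕ, 1 ≤ t → ∀ i j, d ^ t ∣ (M ^ t) i j := by
  intro t
  induction t with
  | zero => omega
  | succ t ih =>
    intro _ i j
    rcases Nat.eq_zero_or_pos t with h1 | h1
    · subst h1; simpa using h i j
    · rw [pow_succ, pow_succ, Matrix.mul_apply]
      exact Finset.dvd_sum fun x _ => mul_dvd_mul (ih h1 i x) (h x j)

lemma key_prime_order {O : Type*} [CommRing O] [IsDomain O] [IsDiscreteValuationRing O] {n : ℕ}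
    (l : ℕ) (hl : l.Prime) (e : ℕ) (he : 1 ≤ e) (π : O) (hirr : Irreducible π)
    (hmax : IsLocalRing.maximalIdeal O = Ideal.span {π})
    (u : Oˣ) (hu : (l : O) * u = π ^ e)
    (hle : l > e + 1)
    (p : ℕ) (hp : p.Prime)
    (M : Matrix (Fin n) (Fin n) O) (hM : ∀ i j, π ∣ M i j)
    (hpow : (1 + M) ^ p = 1) : M = 0 := by
  classical
  by_contra hM0
  have hex : ∃ i j, M i j ≠ 0 := by
    by_contra h
    push_neg at h
    exact hM0 (by ext i j; simpa using h i j)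
  obtain ⟨i0, j0, hij0⟩ := hex
  have hprime : Prime π := UniqueFactorizationMonoid.irreducible_iff_prime.mp hirr
  have hfin : FiniteMultiplicity π (M i0 j0) :=
    FiniteMultiplicity.of_prime_left hprime hij0
  obtain ⟨n0, hn0⟩ := hfin
  have hP : ∃ K, ¬ ∀ i j, π ^ K ∣ M i j := ⟨n0 + 1, fun h => hn0 (h i0 j0)⟩
  have hNspec := Nat.find_spec hP
  have hmin : ∀ K, K < Nat.find hP → ∀ i j, π ^ K ∣ M i j := fun K hK =>
    not_not.mp (Nat.find_min hP hK)
  have hN0 : Nat.find hP ≠ 0 := fun h => hNspec (by rw [h]; intro i j; simp)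
  have hN1 : Nat.find hP ≠ 1 := fun h => hNspec (by rw [h]; intro i j; simpa using hM i j)
  set N := Nat.find hP with hNdef
  set k := N - 1 with hk
  have hN2 : 2 ≤ N := by omega
  have hk1 : 1 ≤ k := by omega
  have hkd : ∀ i j, π ^ k ∣ M i j := hmin k (by omega)
  apply hNspec
  have hkN : N = k + 1 := by omega
  rw [hkN]
  intro i j
  -- the binomial identity
  have hcomm : Commute M (1 : Matrix (Fin n) (Fin n) O) := Commute.one_right M
  have hsum : ∑ m ∈ Finset.range (p + 1),
      M ^ m * ((p.choose m : ℕ) : Matrix (Fin n) (Fin n) O) = 1 := by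
    have hbin := hcomm.add_pow p
    simp only [one_pow, mul_one] at hbin
    calc ∑ m ∈ Finset.range (p + 1), M ^ m * ((p.choose m : ℕ) : Matrix (Fin n) (Fin n) O)
        = (M + 1) ^ p := hbin.symm
      _ = (1 + M) ^ p := by rw [add_comm]
      _ = 1 := hpow
  have hsplit : ∑ m ∈ Finset.range (p + 1),
      M ^ m * ((p.choose m : ℕ) : Matrix (Fin n) (Fin n) O)
      = ((1 : Matrix (Fin n) (Fin n) O) + M * (p : Matrix (Fin n) (Fin n) O))
      + ∑ m ∈ Finset.Ico 2 (p + 1), M ^ m * ((p.choose m : ℕ) : Matrix (Fin n) (Fin n) O) := by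
    rw [Finset.range_eq_Ico,
      ← Finset.sum_Ico_consecutive _ (by omega : (0:ℕ) ≤ 2) (by have := hp.two_le; omega : 2 ≤ p + 1)]
    congr 1
    have h02 : Finset.Ico 0 2 = ({0, 1} : Finset ℕ) := by decide
    rw [h02, Finset.sum_insert (by decide), Finset.sum_singleton]
    simp [Nat.choose_one_right]
  have hS : M * (p : Matrix (Fin n) (Fin n) O)
      = - ∑ m ∈ Finset.Ico 2 (p + 1), M ^ m * ((p.choose m : ℕ) : Matrix (Fin n) (Fin n) O) := by
    have h := hsplit.symm.trans hsum
    rw [add_assoc] at h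
    have h2 : M * (p : Matrix (Fin n) (Fin n) O)
        + ∑ m ∈ Finset.Ico 2 (p + 1), M ^ m * ((p.choose m : ℕ) : Matrix (Fin n) (Fin n) O)
        = 0 := by
      have := h.trans (add_zero (1 : Matrix (Fin n) (Fin n) O)).symm
      exact add_left_cancel this
    exact eq_neg_of_add_eq_zero_left h2
  have hcast : ∀ (A : Matrix (Fin n) (Fin n) O) (c : ℕ) (i' j' : Fin n),
      (A * ((c : ℕ) : Matrix (Fin n) (Fin n) O)) i' j' = (c : O) * A i' j' := by
    intro A c i' j'
    rw [← nsmul_eq_mul' A c, Matrix.smul_apply, nsmul_eq_mul]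
  have hentry : (p : O) * M i j
      = - ∑ m ∈ Finset.Ico 2 (p + 1), ((p.choose m : ℕ) : O) * (M ^ m) i j := by
    have h := congrArg (fun X : Matrix (Fin n) (Fin n) O => X i j) hS
    simp only [Matrix.neg_apply, Matrix.sum_apply] at h
    rw [hcast] at h
    rw [h]
    congr 1
    exact Finset.sum_congr rfl fun m _ => hcast _ _ _ _
  -- basic divisibilities
  have hπl : π ^ e ∣ (l : O) := ⟨↑u⁻¹, (Units.eq_mul_inv_iff_mul_eq u).mpr hu⟩
  have hMm : ∀ m, 2 ≤ m → π ^ (k + 1) ∣ (M ^ m) i j := by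
    intro m hm
    have h1 : (π ^ k) ^ m ∣ (M ^ m) i j := matrix_pow_entry_dvd _ M hkd m (by omega) i j
    have h2 : π ^ (k + 1) ∣ (π ^ k) ^ m := by
      rw [← pow_mul]
      exact pow_dvd_pow π (by nlinarith)
    exact h2.trans h1
  rcases eq_or_ne p l with rfl | hne
  · -- p = l
    have hterm : ∀ m ∈ Finset.Ico 2 (p + 1),
        π ^ (e + (k + 1)) ∣ ((p.choose m : ℕ) : O) * (M ^ m) i j := by
      intro m hm
      simp only [Finset.mem_Ico] at hm
      rcases eq_or_ne m p with rfl | hml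
      · rw [Nat.choose_self]
        have h1 : (π ^ k) ^ m ∣ (M ^ m) i j := matrix_pow_entry_dvd _ M hkd m (by omega) i j
        have h2 : π ^ (e + (k + 1)) ∣ (π ^ k) ^ m := by
          rw [← pow_mul]
          exact pow_dvd_pow π (by nlinarith)
        simpa using (h2.trans h1).mul_left 1
      · have hml' : m < p := by omega
        obtain ⟨c, hc⟩ := hp.dvd_choose_self (by omega : m ≠ 0) hml'
        have hcc : ((p.choose m : ℕ) : O) = (p : O) * (c : O) := by rw [hc]; push_cast; ring
        rw [hcc, mul_assoc, pow_add]
        exact mul_dvd_mul hπl ((hMm m (by omega)).mul_left _)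
    have hdvl : π ^ (e + (k + 1)) ∣ (p : O) * M i j := by
      rw [hentry]
      exact dvd_neg.mpr (Finset.dvd_sum hterm)
    have hπe : (π : O) ^ e ≠ 0 := pow_ne_zero e hirr.ne_zero
    have heq : π ^ e * (↑u⁻¹ * M i j) = (p : O) * M i j := by
      rw [← hu, mul_assoc, ← mul_assoc (u : O), Units.mul_inv, one_mul]
    have h2 : π ^ e * π ^ (k + 1) ∣ π ^ e * (↑u⁻¹ * M i j) := by
      rw [← pow_add, heq]; exact hdvl
    have h4 : π ^ (k + 1) ∣ ↑u⁻¹ * M i j := (mul_dvd_mul_iff_left hπe).mp h2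
    have h5 := h4.mul_left (u : O)
    rwa [← mul_assoc, Units.mul_inv, one_mul] at h5
  · -- p ≠ l : p is a unit
    have hπl1 : π ∣ (l : O) := (dvd_pow_self π (by omega : e ≠ 0)).trans hπl
    have hpu : IsUnit (p : O) := by
      by_contra h
      have hpm : (p : O) ∈ IsLocalRing.maximalIdeal O :=
        (IsLocalRing.mem_maximalIdeal _).mpr h
      rw [hmax, Ideal.mem_span_singleton] at hpm
      have hco : Nat.Coprime p l := (Nat.coprime_primes hp hl).mpr hne
      have hbez := Nat.gcd_eq_gcd_ab p l
      have h1O : (1 : O) = (p : O) * ((Nat.gcdA p l : ℤ) : O) + (l : O) * ((Nat.gcdB p l : ℤ) : O) := by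
        have h1Z : (1 : ℤ) = (p : ℤ) * Nat.gcdA p l + (l : ℤ) * Nat.gcdB p l := by
          rw [← hbez, hco]; norm_num
        calc (1 : O) = (((p : ℤ) * Nat.gcdA p l + (l : ℤ) * Nat.gcdB p l : ℤ) : O) := by
              rw [← h1Z]; norm_num
          _ = (p : O) * ((Nat.gcdA p l : ℤ) : O) + (l : O) * ((Nat.gcdB p l : ℤ) : O) := by
              push_cast; ring
      have hd1 : π ∣ (1 : O) := by
        rw [h1O]
        exact dvd_add (hpm.mul_right _) (hπl1.mul_right _)
      exact hirr.not_isUnit (isUnit_of_dvd_one hd1)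
    obtain ⟨v, hv⟩ := hpu
    have hterm : ∀ m ∈ Finset.Ico 2 (p + 1),
        π ^ (k + 1) ∣ ((p.choose m : ℕ) : O) * (M ^ m) i j := by
      intro m hm
      simp only [Finset.mem_Ico] at hm
      exact (hMm m (by omega)).mul_left _
    have hdvp : π ^ (k + 1) ∣ (p : O) * M i j := by
      rw [hentry]
      exact dvd_neg.mpr (Finset.dvd_sum hterm)
    rw [← hv] at hdvp
    have h5 := hdvp.mul_left (↑v⁻¹ : O)
    rwa [← mul_assoc, Units.inv_mul, one_mul] at h5

/-- Lemma 2.12: in a characteristic-zero DVR `O` with maximal ideal `𝔪`, if the prime `l`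
lies in `𝔪`, `(l) = 𝔪 ^ e` with `e ≥ 1` and `l > e + 1`, then the kernel of the entrywise
reduction `GL_n(O) → GL_n(O/𝔪)` is torsion-free, and consequently every finite subgroup of
`GL_n(O)` injects into `GL_n(O/𝔪)`. -/
theorem dvr_reduction_kernel_torsionFree
    (O : Type*) [CommRing O] [IsDomain O] [IsDiscreteValuationRing O] [CharZero O]
    (l : ℕ) (hl : l.Prime) (hlm : (l : O) ∈ IsLocalRing.maximalIdeal O)
    (e : ℕ) (he : 1 ≤ e)
    (hspan : Ideal.span {(l : O)} = (IsLocalRing.maximalIdeal O) ^ e)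
    (hle : l > e + 1) (n : ℕ) (hn : 1 ≤ n) :
    (∀ A : GL (Fin n) O,
        (∀ i j, Ideal.Quotient.mk (IsLocalRing.maximalIdeal O) ((A : Matrix (Fin n) (Fin n) O) i j)
            = Ideal.Quotient.mk (IsLocalRing.maximalIdeal O) ((1 : Matrix (Fin n) (Fin n) O) i j)) →
        ∀ m : ℕ, 1 ≤ m → A ^ m = 1 → A = 1)
    ∧ (∀ G : Subgroup (GL (Fin n) O), (G : Set (GL (Fin n) O)).Finite →
        Set.InjOn
          (Units.map ((Ideal.Quotient.mk (IsLocalRing.maximalIdeal O)).mapMatrix.toMonoidHom))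
          (G : Set (GL (Fin n) O))) := by
  obtain ⟨π, hirr⟩ := IsDiscreteValuationRing.exists_irreducible O
  have hmax : IsLocalRing.maximalIdeal O = Ideal.span {π} :=
    (IsDiscreteValuationRing.irreducible_iff_uniformizer π).mp hirr
  have hassoc : Associated (l : O) (π ^ e) := by
    have hsp : Ideal.span {(l : O)} = Ideal.span {π ^ e} := by
      rw [hspan, hmax, Ideal.span_singleton_pow]
    exact Ideal.span_singleton_eq_span_singleton.mp hsp
  obtain ⟨u, hu⟩ := hassoc
  have part1 : ∀ A : GL (Fin n) O,
      (∀ i j, Ideal.Quotient.mk (IsLocalRing.maximalIdeal O) ((A : Matrix (Fin n) (Fin n) O) i j)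
          = Ideal.Quotient.mk (IsLocalRing.maximalIdeal O) ((1 : Matrix (Fin n) (Fin n) O) i j)) →
      ∀ m : ℕ, 1 ≤ m → A ^ m = 1 → A = 1 := by
    intro A hA m hm hAm
    by_contra hA1
    have hfo : IsOfFinOrder A := isOfFinOrder_iff_pow_eq_one.mpr ⟨m, by omega, hAm⟩
    set d := orderOf A with hd
    have hd0 : 0 < d := hfo.orderOf_pos
    have hd1 : d ≠ 1 := fun h => hA1 (orderOf_eq_one_iff.mp h)
    have hpp : (d.minFac).Prime := Nat.minFac_prime hd1
    set p := d.minFac with hpdef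
    set B := A ^ (d / p) with hB
    have hpd : p ∣ d := Nat.minFac_dvd d
    have hBp : B ^ p = 1 := by
      rw [hB, ← pow_mul, Nat.div_mul_cancel hpd]
      exact pow_orderOf_eq_one A
    have hBne : B ≠ 1 := by
      intro h
      have hdvd : d ∣ d / p := orderOf_dvd_of_pow_eq_one (show A ^ (d / p) = 1 from h)
      have h1 : 0 < d / p := Nat.div_pos (Nat.minFac_le hd0) hpp.pos
      have h2 : d / p < d := Nat.div_lt_self hd0 hpp.one_lt
      exact absurd (Nat.le_of_dvd h1 hdvd) (by omega)
    have hφA : (Ideal.Quotient.mk (IsLocalRing.maximalIdeal O)).mapMatrix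
        ((A : Matrix (Fin n) (Fin n) O)) = 1 := by
      ext i j
      rw [RingHom.mapMatrix_apply, Matrix.map_apply, hA i j]
      by_cases h : i = j <;> simp [Matrix.one_apply, h]
    have hφB : (Ideal.Quotient.mk (IsLocalRing.maximalIdeal O)).mapMatrix
        ((B : Matrix (Fin n) (Fin n) O)) = 1 := by
      have hBv : ((B : Matrix (Fin n) (Fin n) O)) = (A : Matrix (Fin n) (Fin n) O) ^ (d / p) := by
        rw [hB]; exact Units.val_pow_eq_pow_val _ _
      rw [hBv, map_pow, hφA, one_pow]
    set M := ((B : Matrix (Fin n) (Fin n) O)) - 1 with hM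
    have hMdvd : ∀ i j, π ∣ M i j := by
      intro i j
      have hz : (Ideal.Quotient.mk (IsLocalRing.maximalIdeal O)).mapMatrix M = 0 := by
        rw [hM, map_sub, hφB]
        simp
      have h0 : Ideal.Quotient.mk (IsLocalRing.maximalIdeal O) (M i j) = 0 := by
        have := congrArg (fun X : Matrix (Fin n) (Fin n) (O ⧸ IsLocalRing.maximalIdeal O) =>
          X i j) hz
        simpa [RingHom.mapMatrix_apply, Matrix.map_apply] using this
      have hmem : M i j ∈ IsLocalRing.maximalIdeal O := Ideal.Quotient.eq_zero_iff_mem.mp h0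
      rwa [hmax, Ideal.mem_span_singleton] at hmem
    have hpow1 : (1 + M) ^ p = 1 := by
      have h1M : (1 : Matrix (Fin n) (Fin n) O) + M = (B : Matrix (Fin n) (Fin n) O) := by
        rw [hM]; abel
      rw [h1M, ← Units.val_pow_eq_pow_val, hBp, Units.val_one]
    have hM0 : M = 0 := key_prime_order l hl e he π hirr hmax u hu hle p hpp M hMdvd hpow1
    apply hBne
    have hBv1 : (B : Matrix (Fin n) (Fin n) O) = 1 := by
      have h := hM0
      rw [hM, sub_eq_zero] at h
      exact h
    exact Units.ext (by simpa using hBv1)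
  refine ⟨part1, ?_⟩
  intro G hG A hA B hB hfAB
  haveI : Finite G := hG.to_subtype
  set C := A * B⁻¹ with hC
  have hCG : C ∈ G := G.mul_mem hA (G.inv_mem hB)
  have hord : 0 < orderOf (⟨C, hCG⟩ : G) := orderOf_pos _
  set m := orderOf (⟨C, hCG⟩ : G) with hmdef
  have hCm : C ^ m = 1 := by
    have h := pow_orderOf_eq_one (⟨C, hCG⟩ : G)
    have h2 := congrArg (fun x : G => (x : GL (Fin n) O)) h
    simpa only [SubmonoidClass.coe_pow, OneMemClass.coe_one] using h2
  have hfC : Units.map ((Ideal.Quotient.mk (IsLocalRing.maximalIdeal O)).mapMatrix.toMonoidHom) C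
      = 1 := by
    rw [hC, _root_.map_mul, _root_.map_inv, hfAB, mul_inv_cancel]
  have hCent : ∀ i j, Ideal.Quotient.mk (IsLocalRing.maximalIdeal O)
      ((C : Matrix (Fin n) (Fin n) O) i j)
      = Ideal.Quotient.mk (IsLocalRing.maximalIdeal O) ((1 : Matrix (Fin n) (Fin n) O) i j) := by
    intro i j
    have hval := congrArg
      (fun u : (Matrix (Fin n) (Fin n) (O ⧸ IsLocalRing.maximalIdeal O))ˣ =>
        (u : Matrix (Fin n) (Fin n) (O ⧸ IsLocalRing.maximalIdeal O))) hfC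
    simp only [Units.coe_map, Units.val_one, RingHom.toMonoidHom_eq_coe, MonoidHom.coe_coe] at hval
    have hentry := congrArg
      (fun X : Matrix (Fin n) (Fin n) (O ⧸ IsLocalRing.maximalIdeal O) => X i j) hval
    simp only [RingHom.mapMatrix_apply, Matrix.map_apply] at hentry
    rw [hentry]
    by_cases h : i = j <;> simp [Matrix.one_apply, h]
  have hC1 : C = 1 := part1 C hCent m (by omega) hCm
  rw [hC, mul_inv_eq_one] at hC1
  exact hC1
end

section
/- Let l be a prime number and f ≥ 1 an integer with l ≥ 6f + 2. Then there exist infinitely many primes l' such that l does not divide l'^(6f) · (l'^f − 1) · (l'^(2f) − 1) · (l'^(3f) − 1) · (l'^(4f) − 1); equivalently, there are infinitely many primes l' such that l does not divide the order of the group GL₄(𝔽) where 𝔽 is the finite field with l'^f elements. -/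
/-- Corollary 2.14 (concluding argument): for a prime `l ≥ 6f + 2` there are infinitely many
primes `l'` with `l ∤ l'^(6f)·(l'^f − 1)·(l'^(2f) − 1)·(l'^(3f) − 1)·(l'^(4f) − 1)`,
i.e. such that `l` does not divide `|GL₄(𝔽_{l'^f})|`. -/
theorem infinite_primes_not_dvd_card_GL4
    (l : ℕ) (hl : l.Prime) (f : ℕ) (hf : 1 ≤ f) (hlf : l ≥ 6 * f + 2) :
    {l' : ℕ | l'.Prime ∧
      ¬ l ∣ l' ^ (6 * f) * (l' ^ f - 1) * (l' ^ (2 * f) - 1) * (l' ^ (3 * f) - 1)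
          * (l' ^ (4 * f) - 1)}.Infinite := by
  haveI : Fact l.Prime := ⟨hl⟩
  haveI : NeZero l := ⟨hl.ne_zero⟩
  obtain ⟨g, hg⟩ := IsCyclic.exists_generator (α := (ZMod l)ˣ)
  have hord : orderOf g = l - 1 := by
    rw [orderOf_eq_card_of_forall_mem_zpowers hg, Nat.card_eq_fintype_card, ZMod.card_units_eq_totient,
      Nat.totient_prime hl]
  -- g^(k*f) ≠ 1 for 1 ≤ k*f < l - 1
  have hpow : ∀ k : ℕ, 1 ≤ k → k ≤ 4 → g ^ (k * f) ≠ 1 := by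
    intro k hk1 hk4 h
    have hdvd : orderOf g ∣ k * f := orderOf_dvd_of_pow_eq_one h
    rw [hord] at hdvd
    have h1 : 1 ≤ k * f := Nat.one_le_iff_ne_zero.mpr (by positivity)
    have h2 : k * f < l - 1 := by
      have : k * f ≤ 4 * f := Nat.mul_le_mul_right f hk4
      omega
    have := Nat.le_of_dvd (by omega) hdvd
    omega
  have hgu : IsUnit ((g : (ZMod l)ˣ) : ZMod l) := g.isUnit
  refine (Nat.infinite_setOfPred_prime_and_eq_mod hgu).mono ?_
  rintro p ⟨hp, hpg⟩
  haveI : Fact p.Prime := ⟨hp⟩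
  refine ⟨hp, ?_⟩
  intro hdvd
  have hp2 : 2 ≤ p := hp.two_le
  -- translate divisibility of factors
  have key : ∀ k : ℕ, 1 ≤ k → k ≤ 4 → ¬ l ∣ p ^ (k * f) - 1 := by
    intro k hk1 hk4 h
    have hpk : 1 ≤ p ^ (k * f) := Nat.one_le_pow _ _ (by omega)
    have : ((p ^ (k * f) - 1 : ℕ) : ZMod l) = 0 := (ZMod.natCast_eq_zero_iff _ _).mpr h
    rw [Nat.cast_sub hpk, Nat.cast_pow, Nat.cast_one, sub_eq_zero, hpg] at this
    have : (g : ZMod l) ^ (k * f) = 1 := this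
    rw [← Units.val_pow_eq_pow_val, ← Units.val_one] at this
    exact hpow k hk1 hk4 (Units.ext this)
  have hnp : ¬ l ∣ p ^ (6 * f) := by
    intro h
    have := hl.dvd_of_dvd_pow h
    have : (p : ZMod l) = 0 := (ZMod.natCast_eq_zero_iff _ _).mpr this
    rw [hpg] at this
    exact g.ne_zero this
  rcases (hl.dvd_mul.mp hdvd) with h | h
  · rcases (hl.dvd_mul.mp h) with h | h
    · rcases (hl.dvd_mul.mp h) with h | h
      · rcases (hl.dvd_mul.mp h) with h | h
        · exact hnp h
        · exact key 1 le_rfl (by norm_num) (by simpa using h)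
      · exact key 2 (by norm_num) (by norm_num) h
    · exact key 3 (by norm_num) (by norm_num) h
  · exact key 4 (by norm_num) (by norm_num) h
end

section
/- Let F be a field of characteristic ≠ 2, p a nonzero element of F, j a positive even integer, and k ≥ 3 an integer; set A = j/2 + k − 1 and B = j/2 + k − 2. Let ε, σ ∈ {1, −1}. If the multiset {ε·p^A, ε·p^B, p^(k−2), p^(j+k−1)} equals the multiset {σ·p^A, σ·p^A, σ·p^B, σ·p^B} (i.e., the two four-element lists agree up to permutation), then p^(j+2t−2) = 1 for some t ∈ {0, 1, 2, 3}. -/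
/-- Type VI case of Theorem 2.8: if the scaled Satake parameters of
`π_{f,p} ⊕ |·|^{2-k} ⊕ |·|^{1-j-k}` agree (as a multiset) with those of a type VI
Borel-induced representation, then `p^(j+2t-2) = 1` for some `t ∈ {0,1,2,3}`. -/
theorem typeVI_satake_match
    (F : Type*) [Field F] (h2 : (2 : F) ≠ 0) (p : F) (hp : p ≠ 0)
    (j k : ℕ) (hj : 0 < j) (hjev : Even j) (hk : 3 ≤ k)
    (ε σ : F) (hε : ε = 1 ∨ ε = -1) (hσ : σ = 1 ∨ σ = -1)
    (h : ({ε * p ^ (j / 2 + k - 1), ε * p ^ (j / 2 + k - 2),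
            p ^ (k - 2), p ^ (j + k - 1)} : Multiset F)
        = {σ * p ^ (j / 2 + k - 1), σ * p ^ (j / 2 + k - 1),
            σ * p ^ (j / 2 + k - 2), σ * p ^ (j / 2 + k - 2)}) :
    ∃ t < 4, p ^ (j + 2 * t - 2) = 1 := by
  have hmem : p ^ (j + k - 1) ∈ ({σ * p ^ (j / 2 + k - 1), σ * p ^ (j / 2 + k - 1),
      σ * p ^ (j / 2 + k - 2), σ * p ^ (j / 2 + k - 2)} : Multiset F) := by
    rw [← h]; simp
  have hσ2 : σ ^ 2 = 1 := by rcases hσ with h' | h' <;> simp [h']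
  have hj2 : j / 2 * 2 = j := Nat.div_mul_cancel hjev.two_dvd
  have key : ∀ m n : ℕ, j + k - 1 = m + n → p ^ (j + k - 1) = σ * p ^ n →
      p ^ (2 * m) = 1 := by
    intro m n hmn he
    have h1 : p ^ m * p ^ n = σ * p ^ n := by rw [← pow_add, ← hmn, he]
    have hm : p ^ m = σ := mul_right_cancel₀ (pow_ne_zero _ hp) h1
    calc p ^ (2 * m) = (p ^ m) ^ 2 := by rw [← pow_mul, Nat.mul_comm]
      _ = σ ^ 2 := by rw [hm]
      _ = 1 := hσ2
  simp only [Multiset.insert_eq_cons, Multiset.mem_cons, Multiset.mem_singleton] at hmem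
  rcases hmem with h1 | h1 | h1 | h1
  · refine ⟨1, by norm_num, ?_⟩
    have := key (j / 2) (j / 2 + k - 1) (by omega) h1
    rwa [show j + 2 * 1 - 2 = 2 * (j / 2) by omega]
  · refine ⟨1, by norm_num, ?_⟩
    have := key (j / 2) (j / 2 + k - 1) (by omega) h1
    rwa [show j + 2 * 1 - 2 = 2 * (j / 2) by omega]
  · refine ⟨2, by norm_num, ?_⟩
    have := key (j / 2 + 1) (j / 2 + k - 2) (by omega) h1
    rwa [show j + 2 * 2 - 2 = 2 * (j / 2 + 1) by omega]
  · refine ⟨2, by norm_num, ?_⟩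
    have := key (j / 2 + 1) (j / 2 + k - 2) (by omega) h1
    rwa [show j + 2 * 2 - 2 = 2 * (j / 2 + 1) by omega]
end

section
/- Let F be a field of characteristic ≠ 2, p a nonzero element of F, j a positive even integer, and k ≥ 3 an integer; set A = j/2 + k − 1 and B = j/2 + k − 2. Let ε, σ ∈ {1, −1}. If the multiset {ε·p^A, ε·p^B, p^(k−2), p^(j+k−1)} equals the multiset {σ·p^A, −σ·p^A, −σ·p^B, σ·p^B} (i.e., the two four-element lists agree up to permutation), then p^(j+2t−2) = 1 for some t ∈ {0, 1, 2, 3}. -/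
/-- Type V case of Theorem 2.8: if the scaled Satake parameters of
`π_{f,p} ⊕ |·|^{2-k} ⊕ |·|^{1-j-k}` agree (as a multiset) with those of a type V
Borel-induced representation, then `p^(j+2t-2) = 1` for some `t ∈ {0,1,2,3}`. -/
theorem typeV_satake_match
    (F : Type*) [Field F] (h2 : (2 : F) ≠ 0) (p : F) (hp : p ≠ 0)
    (j k : ℕ) (hj : 0 < j) (hjev : Even j) (hk : 3 ≤ k)
    (ε σ : F) (hε : ε = 1 ∨ ε = -1) (hσ : σ = 1 ∨ σ = -1)
    (h : ({ε * p ^ (j / 2 + k - 1), ε * p ^ (j / 2 + k - 2),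
            p ^ (k - 2), p ^ (j + k - 1)} : Multiset F)
        = {σ * p ^ (j / 2 + k - 1), -σ * p ^ (j / 2 + k - 1),
            -σ * p ^ (j / 2 + k - 2), σ * p ^ (j / 2 + k - 2)}) :
    ∃ t < 4, p ^ (j + 2 * t - 2) = 1 := by
  obtain ⟨m, rfl⟩ := hjev
  have hm : 1 ≤ m := by omega
  have hσ2 : σ * σ = 1 := by rcases hσ with h' | h' <;> simp [h']
  have hmem : p ^ (k - 2) ∈
      ({σ * p ^ ((m + m) / 2 + k - 1), -σ * p ^ ((m + m) / 2 + k - 1),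
        -σ * p ^ ((m + m) / 2 + k - 2), σ * p ^ ((m + m) / 2 + k - 2)} : Multiset F) := by
    rw [← h]
    simp [Multiset.insert_eq_cons, Multiset.mem_cons]
  have hd : (m + m) / 2 = m := by omega
  rw [hd] at hmem
  simp only [Multiset.insert_eq_cons, Multiset.mem_cons, Multiset.mem_singleton] at hmem
  have sq : ∀ e : ℕ, p ^ (k - 2) = σ * p ^ e ∨ p ^ (k - 2) = -σ * p ^ e →
      p ^ ((k - 2) + (k - 2)) = p ^ (e + e) := by
    intro e he
    rcases he with he | he
    · calc p ^ ((k - 2) + (k - 2)) = (σ * p ^ e) * (σ * p ^ e) := by rw [pow_add, he]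
        _ = (σ * σ) * (p ^ e * p ^ e) := by ring
        _ = p ^ (e + e) := by rw [hσ2, one_mul, pow_add]
    · calc p ^ ((k - 2) + (k - 2)) = (-σ * p ^ e) * (-σ * p ^ e) := by rw [pow_add, he]
        _ = (σ * σ) * (p ^ e * p ^ e) := by ring
        _ = p ^ (e + e) := by rw [hσ2, one_mul, pow_add]
  have cancel : ∀ a b : ℕ, a ≤ b → p ^ a = p ^ b → p ^ (b - a) = 1 := by
    intro a b hab hpe
    have h1 : p ^ a * p ^ (b - a) = p ^ a * 1 := by
      rw [mul_one, ← pow_add, show a + (b - a) = b by omega]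
      exact hpe.symm
    exact mul_left_cancel₀ (pow_ne_zero a hp) h1
  rcases hmem with he | he | he | he
  · have hc := cancel _ _ (by omega) (sq (m + k - 1) (Or.inl he))
    exact ⟨2, by norm_num, by
      rw [show m + m + 2 * 2 - 2 = (m + k - 1) + (m + k - 1) - ((k - 2) + (k - 2)) by omega]
      exact hc⟩
  · have hc := cancel _ _ (by omega) (sq (m + k - 1) (Or.inr he))
    exact ⟨2, by norm_num, by
      rw [show m + m + 2 * 2 - 2 = (m + k - 1) + (m + k - 1) - ((k - 2) + (k - 2)) by omega]
      exact hc⟩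
  · have hc := cancel _ _ (by omega) (sq (m + k - 2) (Or.inr he))
    exact ⟨1, by norm_num, by
      rw [show m + m + 2 * 1 - 2 = (m + k - 2) + (m + k - 2) - ((k - 2) + (k - 2)) by omega]
      exact hc⟩
  · have hc := cancel _ _ (by omega) (sq (m + k - 2) (Or.inl he))
    exact ⟨1, by norm_num, by
      rw [show m + m + 2 * 1 - 2 = (m + k - 2) + (m + k - 2) - ((k - 2) + (k - 2)) by omega]
      exact hc⟩
end

section
/- Let F be a field of characteristic ≠ 2, p a nonzero element of F, j a positive even integer, and k ≥ 3 an integer; set A = j/2 + k − 1 and B = j/2 + k − 2. Let ε, σ ∈ {1, −1}. If the multiset {ε·p^A, ε·p^B, p^(k−2), p^(j+k−1)} equals the multiset {σ·p^(A+1), σ·p^A, σ·p^B, σ·p^(B−1)} (i.e., the two four-element lists agree up to permutation), then p^(j+2t−2) = 1 for some t ∈ {0, 1, 2, 3}. -/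
/-- Type IV case of Theorem 2.8: if the scaled Satake parameters of
`π_{f,p} ⊕ |·|^{2-k} ⊕ |·|^{1-j-k}` agree (as a multiset) with those of a type IV
Borel-induced representation, then `p^(j+2t-2) = 1` for some `t ∈ {0,1,2,3}`. -/
theorem typeIV_satake_match
    (F : Type*) [Field F] (h2 : (2 : F) ≠ 0) (p : F) (hp : p ≠ 0)
    (j k : ℕ) (hj : 0 < j) (hjev : Even j) (hk : 3 ≤ k)
    (ε σ : F) (hε : ε = 1 ∨ ε = -1) (hσ : σ = 1 ∨ σ = -1)
    (h : ({ε * p ^ (j / 2 + k - 1), ε * p ^ (j / 2 + k - 2),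
            p ^ (k - 2), p ^ (j + k - 1)} : Multiset F)
        = {σ * p ^ (j / 2 + k - 1 + 1), σ * p ^ (j / 2 + k - 1),
            σ * p ^ (j / 2 + k - 2), σ * p ^ (j / 2 + k - 2 - 1)}) :
    ∃ t < 4, p ^ (j + 2 * t - 2) = 1 := by
  obtain ⟨m, hm2⟩ := hjev
  obtain rfl : j = 2 * m := by omega
  have hm1 : 1 ≤ m := by omega
  have hd : 2 * m / 2 = m := by omega
  rw [hd] at h
  have hσ2 : σ * σ = 1 := by rcases hσ with h' | h' <;> simp [h']
  have key : ∀ a b : ℕ, p ^ (a + b) = σ * p ^ b → p ^ (2 * a) = 1 := by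
    intro a b hab
    have h1 : p ^ a * p ^ b = σ * p ^ b := by rw [← pow_add]; exact hab
    have h2 : p ^ a = σ := mul_right_cancel₀ (pow_ne_zero _ hp) h1
    calc p ^ (2 * a) = p ^ a * p ^ a := by rw [two_mul, pow_add]
    _ = 1 := by rw [h2, hσ2]
  have hmem : p ^ (2 * m + k - 1) ∈ ({σ * p ^ (m + k - 1 + 1), σ * p ^ (m + k - 1),
      σ * p ^ (m + k - 2), σ * p ^ (m + k - 2 - 1)} : Multiset F) := by
    rw [← h]; simp
  simp only [Multiset.insert_eq_cons, Multiset.mem_cons, Multiset.mem_singleton] at hmem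
  rcases hmem with h' | h' | h' | h'
  · refine ⟨0, by norm_num, ?_⟩
    have := key (m - 1) (m + k - 1 + 1)
      (by rw [show m - 1 + (m + k - 1 + 1) = 2 * m + k - 1 by omega]; exact h')
    rw [show 2 * m + 2 * 0 - 2 = 2 * (m - 1) by omega]; exact this
  · refine ⟨1, by norm_num, ?_⟩
    have := key m (m + k - 1)
      (by rw [show m + (m + k - 1) = 2 * m + k - 1 by omega]; exact h')
    rw [show 2 * m + 2 * 1 - 2 = 2 * m by omega]; exact this
  · refine ⟨2, by norm_num, ?_⟩
    have := key (m + 1) (m + k - 2)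
      (by rw [show m + 1 + (m + k - 2) = 2 * m + k - 1 by omega]; exact h')
    rw [show 2 * m + 2 * 2 - 2 = 2 * (m + 1) by omega]; exact this
  · refine ⟨3, by norm_num, ?_⟩
    have := key (m + 2) (m + k - 2 - 1)
      (by rw [show m + 2 + (m + k - 2 - 1) = 2 * m + k - 1 by omega]; exact h')
    rw [show 2 * m + 2 * 3 - 2 = 2 * (m + 2) by omega]; exact this
end

section
/- Let F be a field of characteristic ≠ 2, p a nonzero element of F, j a positive even integer, and k ≥ 3 an integer; set A = j/2 + k − 1 and B = j/2 + k − 2. Let ε ∈ {1, −1} and let β be any nonzero element of F. If the multiset {ε·p^A, ε·p^B, p^(k−2), p^(j+k−1)} equals the multiset {β·p^A, β·p^B, β⁻¹·p^A, β⁻¹·p^B} (i.e., the two four-element lists agree up to permutation), then p^(j+2t−2) = 1 for some t ∈ {0, 1, 2, 3}. -/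
section helpers
variable {F : Type*} [Field F] {p ε β : F}

private lemma powCancel2 (hp : p ≠ 0) {a b d : ℕ} (h : p ^ a = p ^ b)
    (hd : a + d = b ∨ b + d = a) : p ^ d = 1 := by
  rcases hd with hd | hd
  · have h2 : p ^ a * p ^ d = p ^ a * 1 := by rw [mul_one, ← pow_add, hd, h]
    exact mul_left_cancel₀ (pow_ne_zero a hp) h2
  · have h2 : p ^ b * p ^ d = p ^ b * 1 := by rw [mul_one, ← pow_add, hd, ← h]
    exact mul_left_cancel₀ (pow_ne_zero b hp) h2

private lemma square_key (hε : ε = 1 ∨ ε = -1) {X Y : ℕ} (key : ε * p ^ X = p ^ Y) :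
    p ^ (X + X) = p ^ (Y + Y) := by
  have h2 : (ε * p ^ X) * (ε * p ^ X) = p ^ Y * p ^ Y := by rw [key]
  rw [pow_add, pow_add]
  rcases hε with h | h <;> subst h <;> linear_combination h2

private lemma combo11 {a1 e1 a2 e2 : ℕ}
    (h1 : ε * p ^ a1 = β * p ^ e1) (h2 : p ^ a2 = β * p ^ e2) :
    ε * p ^ (a1 + e2) = p ^ (e1 + a2) := by
  rw [pow_add, pow_add, ← mul_assoc, h1, h2]; ring

private lemma combo12 (hβ : β ≠ 0) {a1 e1 a2 e2 : ℕ}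
    (h1 : ε * p ^ a1 = β * p ^ e1) (h2 : p ^ a2 = β⁻¹ * p ^ e2) :
    ε * p ^ (a1 + a2) = p ^ (e1 + e2) := by
  have h2' : β * p ^ a2 = p ^ e2 := by
    rw [h2, ← mul_assoc, mul_inv_cancel₀ hβ, one_mul]
  rw [pow_add, pow_add]
  linear_combination p ^ a2 * h1 + p ^ e1 * h2'

private lemma combo21 (hβ : β ≠ 0) {a1 e1 a2 e2 : ℕ}
    (h1 : ε * p ^ a1 = β⁻¹ * p ^ e1) (h2 : p ^ a2 = β * p ^ e2) :
    ε * p ^ (a1 + a2) = p ^ (e1 + e2) := by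
  have h1' : β * (ε * p ^ a1) = p ^ e1 := by
    rw [h1, ← mul_assoc, mul_inv_cancel₀ hβ, one_mul]
  apply mul_left_cancel₀ hβ
  rw [pow_add, pow_add]
  linear_combination p ^ a2 * h1' + p ^ e1 * h2

private lemma combo22 (hβ : β ≠ 0) {a1 e1 a2 e2 : ℕ}
    (h1 : ε * p ^ a1 = β⁻¹ * p ^ e1) (h2 : p ^ a2 = β⁻¹ * p ^ e2) :
    ε * p ^ (a1 + e2) = p ^ (e1 + a2) := by
  exact combo11 (β := β⁻¹) h1 h2

end helpers

/-- Type III case of Theorem 2.8: if the scaled Satake parameters of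
`π_{f,p} ⊕ |·|^{2-k} ⊕ |·|^{1-j-k}` agree (as a multiset) with those of a type III
Borel-induced representation, then `p^(j+2t-2) = 1` for some `t ∈ {0,1,2,3}`. -/
theorem typeIII_satake_match
    (F : Type*) [Field F] (h2 : (2 : F) ≠ 0) (p : F) (hp : p ≠ 0)
    (j k : ℕ) (hj : 0 < j) (hjev : Even j) (hk : 3 ≤ k)
    (ε : F) (hε : ε = 1 ∨ ε = -1) (β : F) (hβ : β ≠ 0)
    (h : ({ε * p ^ (j / 2 + k - 1), ε * p ^ (j / 2 + k - 2),
            p ^ (k - 2), p ^ (j + k - 1)} : Multiset F)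
        = {β * p ^ (j / 2 + k - 1), β * p ^ (j / 2 + k - 2),
            β⁻¹ * p ^ (j / 2 + k - 1), β⁻¹ * p ^ (j / 2 + k - 2)}) :
    ∃ t < 4, p ^ (j + 2 * t - 2) = 1 := by
  obtain ⟨r, hr⟩ := hjev
  have hr1 : 1 ≤ r := by omega
  have hm1 : ε * p ^ (j / 2 + k - 1)
      ∈ ({β * p ^ (j / 2 + k - 1), β * p ^ (j / 2 + k - 2),
          β⁻¹ * p ^ (j / 2 + k - 1), β⁻¹ * p ^ (j / 2 + k - 2)} : Multiset F) := by
    rw [← h]; simp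
  have hm2 : p ^ (k - 2)
      ∈ ({β * p ^ (j / 2 + k - 1), β * p ^ (j / 2 + k - 2),
          β⁻¹ * p ^ (j / 2 + k - 1), β⁻¹ * p ^ (j / 2 + k - 2)} : Multiset F) := by
    rw [← h]; simp
  simp only [Multiset.insert_eq_cons, Multiset.mem_cons, Multiset.mem_singleton] at hm1 hm2
  rcases hm1 with h1 | h1 | h1 | h1 <;> rcases hm2 with hh2 | hh2 | hh2 | hh2 <;>
    [skip; skip; skip; skip; skip; skip; skip; skip;
     skip; skip; skip; skip; skip; skip; skip; skip] <;>
  · first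
      | have key := combo11 (p := p) (ε := ε) h1 hh2
      | have key := combo12 (p := p) (ε := ε) hβ h1 hh2
      | have key := combo21 (p := p) (ε := ε) hβ h1 hh2
      | have key := combo22 (p := p) (ε := ε) hβ h1 hh2
    have sq := square_key hε key
    first
      | exact ⟨0, by norm_num, powCancel2 hp sq (by omega)⟩
      | exact ⟨1, by norm_num, powCancel2 hp sq (by omega)⟩
      | exact ⟨2, by norm_num, powCancel2 hp sq (by omega)⟩
      | exact ⟨3, by norm_num, powCancel2 hp sq (by omega)⟩
end

section
/- Let F be a field of characteristic ≠ 2, p a nonzero element of F, j a positive even integer, and k ≥ 3 an integer; set A = j/2 + k − 1 and B = j/2 + k − 2. Suppose p^(j+2t−2) ≠ 1 for every t ∈ {0, 1, 2, 3}. Then for all signs ε, σ ∈ {1, −1} and every nonzero β ∈ F, the multiset S = {ε·p^A, ε·p^B, p^(k−2), p^(j+k−1)} is not equal to any of the following multisets: {β·p^A, β·p^B, β⁻¹·p^A, β⁻¹·p^B} (type III), {σ·p^(A+1), σ·p^A, σ·p^B, σ·p^(B−1)} (type IV), {σ·p^A, −σ·p^A, −σ·p^B, σ·p^B} (type V), {σ·p^A,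 σ·p^A, σ·p^B, σ·p^B} (type VI). -/
section Key

variable {F : Type*} [Field F]

/-- If an element of the form `t * p^(A)`-shape (i.e. `t*(p*(x*c))`) lies in the multiset
`S = {ε*(p*(x*c)), ε*(x*c), c, p*(x^2*c)}`, then `t = ε`. -/
private lemma memb {p x c t ε : F} (hp : p ≠ 0) (hx : x ≠ 0) (hc : c ≠ 0)
    (ht2 : t ^ 2 = 1) (hε2 : ε ^ 2 = 1) (hp2' : ¬ p ^ 2 = 1)
    (H2 : ¬ x ^ 2 = 1) (H3 : ¬ x ^ 2 * p ^ 2 = 1)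
    (h : t * (p * (x * c)) = ε * (p * (x * c)) ∨ t * (p * (x * c)) = ε * (x * c) ∨
         t * (p * (x * c)) = c ∨ t * (p * (x * c)) = p * (x ^ 2 * c)) : t = ε := by
  have hxc : x * c ≠ 0 := mul_ne_zero hx hc
  have hpxc : p * (x * c) ≠ 0 := mul_ne_zero hp hxc
  rcases h with h | h | h | h
  · exact mul_right_cancel₀ hpxc h
  · have h' : (t * p) * (x * c) = ε * (x * c) := by linear_combination h
    have h'' := mul_right_cancel₀ hxc h'
    exact absurd (show p ^ 2 = 1 by
      linear_combination (t * p + ε) * h'' - p ^ 2 * ht2 + hε2) hp2'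
  · have h' : (t * (p * x)) * c = 1 * c := by linear_combination h
    have h'' := mul_right_cancel₀ hc h'
    exact absurd (show x ^ 2 * p ^ 2 = 1 by
      linear_combination (t * (p * x) + 1) * h'' - (p * x) ^ 2 * ht2) H3
  · have h' : t * (p * (x * c)) = x * (p * (x * c)) := by linear_combination h
    have h'' := mul_right_cancel₀ hpxc h'
    exact absurd (show x ^ 2 = 1 by linear_combination (x + t) * h''.symm + ht2) H2

private lemma key (p x c ε σ β v2 v3 v4 w3 w4 u3 u4 : F) (h2 : (2 : F) ≠ 0)
    (hp : p ≠ 0) (hx : x ≠ 0) (hc : c ≠ 0) (hβ : β ≠ 0)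
    (hε : ε = 1 ∨ ε = -1) (hσ : σ = 1 ∨ σ = -1)
    (H1 : x ^ 2 ≠ p ^ 2) (H2 : x ^ 2 ≠ 1) (H3 : x ^ 2 * p ^ 2 ≠ 1)
    (H4 : x ^ 2 * p ^ 4 ≠ 1)
    (Hp2 : p ^ 2 = 1 → x ^ 2 = 1) (Hp4 : p ^ 4 = 1 → x ^ 4 = 1) :
    (({ε * (p * (x * c)), ε * (x * c), c, p * (x ^ 2 * c)} : Multiset F)
        ≠ {β * (p * (x * c)), β * (x * c), β⁻¹ * (p * (x * c)), β⁻¹ * (x * c)})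
    ∧ (({ε * (p * (x * c)), ε * (x * c), c, p * (x ^ 2 * c)} : Multiset F)
        ≠ {σ * (p ^ 2 * (x * c)), v2, v3, v4})
    ∧ (({ε * (p * (x * c)), ε * (x * c), c, p * (x ^ 2 * c)} : Multiset F)
        ≠ {σ * (p * (x * c)), -σ * (p * (x * c)), w3, w4})
    ∧ (({ε * (p * (x * c)), ε * (x * c), c, p * (x ^ 2 * c)} : Multiset F)
        ≠ {σ * (p * (x * c)), σ * (p * (x * c)), u3, u4}) := by
  have hxc : x * c ≠ 0 := mul_ne_zero hx hc
  have hpxc : p * (x * c) ≠ 0 := mul_ne_zero hp hxc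
  have hε2 : ε ^ 2 = 1 := by rcases hε with rfl | rfl <;> norm_num
  have hσ2 : σ ^ 2 = 1 := by rcases hσ with rfl | rfl <;> norm_num
  have hε0 : ε ≠ 0 := by rcases hε with rfl | rfl <;> simp
  have hσ0 : σ ≠ 0 := by rcases hσ with rfl | rfl <;> simp
  have hp2' : ¬ p ^ 2 = 1 := fun h => H2 (Hp2 h)
  have hp4' : ¬ p ^ 4 = 1 := by
    intro h
    have h4 : x ^ 2 * x ^ 2 = 1 := by linear_combination Hp4 h
    rcases mul_self_eq_one_iff.mp h4 with h1 | h1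
    · exact H2 h1
    · have hpp : p ^ 2 * p ^ 2 = 1 := by linear_combination h
      rcases mul_self_eq_one_iff.mp hpp with hq | hq
      · exact hp2' hq
      · exact H3 (by rw [h1, hq]; ring)
  refine ⟨?_, ?_, ?_, ?_⟩
  -- Type III
  · intro h
    have hβi : β * β⁻¹ = 1 := mul_inv_cancel₀ hβ
    have mR : p * (x ^ 2 * c) ∈ ({β * (p * (x * c)), β * (x * c),
        β⁻¹ * (p * (x * c)), β⁻¹ * (x * c)} : Multiset F) := by rw [← h]; simp
    have mE : ε * (p * (x * c)) ∈ ({β * (p * (x * c)), β * (x * c),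
        β⁻¹ * (p * (x * c)), β⁻¹ * (x * c)} : Multiset F) := by rw [← h]; simp
    simp only [Multiset.insert_eq_cons, Multiset.mem_cons, Multiset.mem_singleton] at mR mE
    have hE : β = ε ∨ β = ε * p ∨ β * p = ε := by
      rcases mE with h1 | h1 | h1 | h1
      · exact Or.inl (mul_right_cancel₀ hpxc h1).symm
      · refine Or.inr (Or.inl ?_)
        exact (mul_right_cancel₀ hxc
          (show (ε * p) * (x * c) = β * (x * c) by linear_combination h1)).symm
      · have h'' : β * ε = 1 := mul_right_cancel₀ hpxc
          (show (β * ε) * (p * (x * c)) = 1 * (p * (x * c)) by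
            linear_combination β * h1 + (p * (x * c)) * hβi)
        exact Or.inl (by linear_combination ε * h'' - β * hε2)
      · have h'' : β * (ε * p) = 1 := mul_right_cancel₀ hxc
          (show (β * (ε * p)) * (x * c) = 1 * (x * c) by
            linear_combination β * h1 + (x * c) * hβi)
        exact Or.inr (Or.inr (by linear_combination ε * h'' - (β * p) * hε2))
    have hR : x = β ∨ p * x = β ∨ β * x = 1 ∨ β * (p * x) = 1 := by
      rcases mR with h1 | h1 | h1 | h1
      · exact Or.inl (mul_right_cancel₀ hpxc
          (show x * (p * (x * c)) = β * (p * (x * c)) by linear_combination h1))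
      · exact Or.inr (Or.inl (mul_right_cancel₀ hxc
          (show (p * x) * (x * c) = β * (x * c) by linear_combination h1)))
      · exact Or.inr (Or.inr (Or.inl (mul_right_cancel₀ hpxc
          (show (β * x) * (p * (x * c)) = 1 * (p * (x * c)) by
            linear_combination β * h1 + (p * (x * c)) * hβi))))
      · exact Or.inr (Or.inr (Or.inr (mul_right_cancel₀ hxc
          (show (β * (p * x)) * (x * c) = 1 * (x * c) by
            linear_combination β * h1 + (x * c) * hβi))))
    rcases hE with hA | hB | hC
    · rcases hR with h1 | h1 | h1 | h1
      · exact H2 (by linear_combination (x + ε) * (h1.trans hA) + hε2)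
      · exact H3 (by linear_combination (p * x + ε) * (h1.trans hA) + hε2)
      · have h1' : ε * x = 1 := by linear_combination h1 - x * hA
        exact H2 (by linear_combination (ε * x + 1) * h1' - x ^ 2 * hε2)
      · have h1' : ε * (p * x) = 1 := by linear_combination h1 - (p * x) * hA
        exact H3 (by linear_combination (ε * (p * x) + 1) * h1' - (p * x) ^ 2 * hε2)
    · rcases hR with h1 | h1 | h1 | h1
      · exact H1 (by linear_combination (x + ε * p) * (h1.trans hB) + p ^ 2 * hε2)
      · have h'' : x = ε := mul_left_cancel₀ hp
          (show p * x = p * ε by linear_combination h1.trans hB)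
        exact H2 (by linear_combination (x + ε) * h'' + hε2)
      · have h1' : ε * (p * x) = 1 := by linear_combination h1 - x * hB
        exact H3 (by linear_combination (ε * (p * x) + 1) * h1' - (p * x) ^ 2 * hε2)
      · have h1' : ε * (p ^ 2 * x) = 1 := by linear_combination h1 - (p * x) * hB
        exact H4 (by linear_combination (ε * (p ^ 2 * x) + 1) * h1' - (p ^ 2 * x) ^ 2 * hε2)
    · rcases hR with h1 | h1 | h1 | h1
      · have h1' : p * x = ε := by linear_combination hC + p * h1
        exact H3 (by linear_combination (p * x + ε) * h1' + hε2)
      · have h1' : p ^ 2 * x = ε := by linear_combination hC + p * h1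
        exact H4 (by linear_combination (p ^ 2 * x + ε) * h1' + hε2)
      · have h1' : ε * x = p := by linear_combination p * h1 - x * hC
        exact H1 (by linear_combination (ε * x + p) * h1' - x ^ 2 * hε2)
      · have h1' : ε * x = 1 := by linear_combination h1 - x * hC
        exact H2 (by linear_combination (ε * x + 1) * h1' - x ^ 2 * hε2)
  -- Type IV
  · intro h
    have m : σ * (p ^ 2 * (x * c)) ∈ ({ε * (p * (x * c)), ε * (x * c), c,
        p * (x ^ 2 * c)} : Multiset F) := by rw [h]; simp
    simp only [Multiset.insert_eq_cons, Multiset.mem_cons, Multiset.mem_singleton] at m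
    rcases m with h1 | h1 | h1 | h1
    · have h'' : σ * p = ε := mul_right_cancel₀ hpxc
        (show (σ * p) * (p * (x * c)) = ε * (p * (x * c)) by linear_combination h1)
      exact hp2' (by linear_combination (σ * p + ε) * h'' - p ^ 2 * hσ2 + hε2)
    · have h'' : σ * p ^ 2 = ε := mul_right_cancel₀ hxc
        (show (σ * p ^ 2) * (x * c) = ε * (x * c) by linear_combination h1)
      exact hp4' (by linear_combination (σ * p ^ 2 + ε) * h'' - p ^ 4 * hσ2 + hε2)
    · have h'' : σ * (p ^ 2 * x) = 1 := mul_right_cancel₀ hc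
        (show (σ * (p ^ 2 * x)) * c = 1 * c by linear_combination h1)
      exact H4 (by linear_combination (σ * (p ^ 2 * x) + 1) * h'' - (p ^ 2 * x) ^ 2 * hσ2)
    · have h'' : σ * p = x := mul_right_cancel₀ hpxc
        (show (σ * p) * (p * (x * c)) = x * (p * (x * c)) by linear_combination h1)
      exact H1 (by linear_combination (x + σ * p) * h''.symm + p ^ 2 * hσ2)
  -- Type V
  · intro h
    have m1 : σ * (p * (x * c)) ∈ ({ε * (p * (x * c)), ε * (x * c), c,
        p * (x ^ 2 * c)} : Multiset F) := by rw [h]; simp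
    have m2 : -σ * (p * (x * c)) ∈ ({ε * (p * (x * c)), ε * (x * c), c,
        p * (x ^ 2 * c)} : Multiset F) := by rw [h]; simp
    simp only [Multiset.insert_eq_cons, Multiset.mem_cons, Multiset.mem_singleton] at m1 m2
    have e1 : σ = ε := memb hp hx hc hσ2 hε2 hp2' H2 H3 m1
    have e2 : -σ = ε := memb hp hx hc (by linear_combination hσ2) hε2 hp2' H2 H3 m2
    have hs : (2 : F) * σ = 0 := by linear_combination e1 - e2
    exact h2 ((mul_eq_zero.mp hs).resolve_right hσ0)
  -- Type VI
  · intro h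
    have m1 : σ * (p * (x * c)) ∈ ({ε * (p * (x * c)), ε * (x * c), c,
        p * (x ^ 2 * c)} : Multiset F) := by rw [h]; simp
    simp only [Multiset.insert_eq_cons, Multiset.mem_cons, Multiset.mem_singleton] at m1
    have e1 : σ = ε := memb hp hx hc hσ2 hε2 hp2' H2 H3 m1
    subst e1
    simp only [Multiset.insert_eq_cons] at h
    rw [Multiset.cons_inj_right] at h
    have m2 : σ * (p * (x * c)) ∈ (σ * (x * c) ::ₘ c ::ₘ {p * (x ^ 2 * c)} : Multiset F) := by
      rw [h]; simp
    simp only [Multiset.mem_cons, Multiset.mem_singleton] at m2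
    rcases m2 with h1 | h1 | h1
    · have h'' : σ * p = σ := mul_right_cancel₀ hxc
        (show (σ * p) * (x * c) = σ * (x * c) by linear_combination h1)
      have hp1 : p = 1 := mul_left_cancel₀ hσ0 (by linear_combination h'')
      exact hp2' (by rw [hp1]; norm_num)
    · have h'' : σ * (p * x) = 1 := mul_right_cancel₀ hc
        (show (σ * (p * x)) * c = 1 * c by linear_combination h1)
      exact H3 (by linear_combination (σ * (p * x) + 1) * h'' - (p * x) ^ 2 * hσ2)
    · have h'' : σ = x := mul_right_cancel₀ hpxc
        (show σ * (p * (x * c)) = x * (p * (x * c)) by linear_combination h1)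
      exact H2 (by linear_combination (x + σ) * h''.symm + hσ2)

end Key

/-- Theorem 2.8 (algebraic content): if `p^(j+2t-2) ≠ 1` for `t = 0,1,2,3`, then the scaled
Satake-parameter multiset `S` of `π_{f,p} ⊕ |·|^{2-k} ⊕ |·|^{1-j-k}` cannot match that of a
Borel-induced representation of type III, IV, V or VI with trivial central character. -/
theorem satake_not_type_III_IV_V_VI
    (F : Type*) [Field F] (h2 : (2 : F) ≠ 0) (p : F) (hp : p ≠ 0)
    (j k : ℕ) (hj : 0 < j) (hjev : Even j) (hk : 3 ≤ k)
    (hne : ∀ t < 4, p ^ (j + 2 * t - 2) ≠ 1) :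
    ∀ ε σ : F, ε = 1 ∨ ε = -1 → σ = 1 ∨ σ = -1 → ∀ β : F, β ≠ 0 →
      ({ε * p ^ (j / 2 + k - 1), ε * p ^ (j / 2 + k - 2),
          p ^ (k - 2), p ^ (j + k - 1)} : Multiset F)
          ≠ {β * p ^ (j / 2 + k - 1), β * p ^ (j / 2 + k - 2),
              β⁻¹ * p ^ (j / 2 + k - 1), β⁻¹ * p ^ (j / 2 + k - 2)}
      ∧ ({ε * p ^ (j / 2 + k - 1), ε * p ^ (j / 2 + k - 2),
          p ^ (k - 2), p ^ (j + k - 1)} : Multiset F)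
          ≠ {σ * p ^ (j / 2 + k - 1 + 1), σ * p ^ (j / 2 + k - 1),
              σ * p ^ (j / 2 + k - 2), σ * p ^ (j / 2 + k - 2 - 1)}
      ∧ ({ε * p ^ (j / 2 + k - 1), ε * p ^ (j / 2 + k - 2),
          p ^ (k - 2), p ^ (j + k - 1)} : Multiset F)
          ≠ {σ * p ^ (j / 2 + k - 1), -σ * p ^ (j / 2 + k - 1),
              -σ * p ^ (j / 2 + k - 2), σ * p ^ (j / 2 + k - 2)}
      ∧ ({ε * p ^ (j / 2 + k - 1), ε * p ^ (j / 2 + k - 2),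
          p ^ (k - 2), p ^ (j + k - 1)} : Multiset F)
          ≠ {σ * p ^ (j / 2 + k - 1), σ * p ^ (j / 2 + k - 1),
              σ * p ^ (j / 2 + k - 2), σ * p ^ (j / 2 + k - 2)} := by
  obtain ⟨m, rfl⟩ := hjev
  have hm1 : 1 ≤ m := by omega
  intro ε σ hε hσ β hβ
  have hx : p ^ m ≠ 0 := pow_ne_zero _ hp
  have hc : p ^ (k - 2) ≠ 0 := pow_ne_zero _ hp
  have hA : p ^ ((m + m) / 2 + k - 1) = p * (p ^ m * p ^ (k - 2)) := by
    rw [show (m + m) / 2 + k - 1 = 1 + (m + (k - 2)) by omega, pow_add, pow_add, pow_one]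
  have hB : p ^ ((m + m) / 2 + k - 2) = p ^ m * p ^ (k - 2) := by
    rw [show (m + m) / 2 + k - 2 = m + (k - 2) by omega, pow_add]
  have hC : p ^ (m + m + k - 1) = p * ((p ^ m) ^ 2 * p ^ (k - 2)) := by
    rw [show m + m + k - 1 = 1 + (m * 2 + (k - 2)) by omega, pow_add, pow_add, pow_one,
      pow_mul]
  have hD : p ^ ((m + m) / 2 + k - 1 + 1) = p ^ 2 * (p ^ m * p ^ (k - 2)) := by
    rw [show (m + m) / 2 + k - 1 + 1 = 2 + (m + (k - 2)) by omega, pow_add, pow_add]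
  rw [hA, hB, hC, hD]
  have H2 : (p ^ m) ^ 2 ≠ 1 := by
    intro h
    exact hne 1 (by norm_num) (by rw [show m + m + 2 * 1 - 2 = m * 2 by omega, pow_mul]; exact h)
  have H3 : (p ^ m) ^ 2 * p ^ 2 ≠ 1 := by
    intro h
    exact hne 2 (by norm_num)
      (by rw [show m + m + 2 * 2 - 2 = m * 2 + 2 by omega, pow_add, pow_mul]; exact h)
  have H4 : (p ^ m) ^ 2 * p ^ 4 ≠ 1 := by
    intro h
    exact hne 3 (by norm_num)
      (by rw [show m + m + 2 * 3 - 2 = m * 2 + 4 by omega, pow_add, pow_mul]; exact h)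
  have H1 : (p ^ m) ^ 2 ≠ p ^ 2 := by
    intro h
    apply hne 0 (by norm_num)
    have h' : p ^ (m + m - 2) * p ^ 2 = 1 * p ^ 2 := by
      rw [one_mul, ← pow_add, show m + m - 2 + 2 = m * 2 by omega, pow_mul]; exact h
    have h'' := mul_right_cancel₀ (pow_ne_zero 2 hp) h'
    rwa [show m + m + 2 * 0 - 2 = m + m - 2 by omega]
  have Hp2 : p ^ 2 = 1 → (p ^ m) ^ 2 = 1 := fun h => by
    rw [← pow_mul, mul_comm, pow_mul, h, one_pow]
  have Hp4 : p ^ 4 = 1 → (p ^ m) ^ 4 = 1 := fun h => by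
    rw [← pow_mul, mul_comm, pow_mul, h, one_pow]
  exact key p (p ^ m) (p ^ (k - 2)) ε σ β _ _ _ _ _ _ _ h2 hp hx hc hβ hε hσ
    H1 H2 H3 H4 Hp2 Hp4
end

section
/- Let F be a field of characteristic ≠ 2, p a nonzero element of F, j a positive even integer, and k ≥ 3 an integer; set A = j/2 + k − 1 and B = j/2 + k − 2. Let σ ∈ {1, −1}. If the multiset {p^(j+k), p^(k−3), p^(j+k−1), p^(k−2)} equals the multiset {σ·p^A, σ·p^A, σ·p^B, σ·p^B} (i.e., the two four-element lists agree up to permutation), then p^(j+2t) = 1 for some t ∈ {0, 1, 2, 3}. -/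
/-- Type VI_c case of Theorem 3.5: if the scaled Satake parameters arising from a local
origin congruence agree (as a multiset) with those of a type VI Borel-induced
representation, then `p^(j+2t) = 1` for some `t ∈ {0,1,2,3}`. -/
theorem localOrigin_typeVI_satake_match
    (F : Type*) [Field F] (h2 : (2 : F) ≠ 0) (p : F) (hp : p ≠ 0)
    (j k : ℕ) (hj : 0 < j) (hjev : Even j) (hk : 3 ≤ k)
    (σ : F) (hσ : σ = 1 ∨ σ = -1)
    (h : ({p ^ (j + k), p ^ (k - 3), p ^ (j + k - 1), p ^ (k - 2)} : Multiset F)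
        = {σ * p ^ (j / 2 + k - 1), σ * p ^ (j / 2 + k - 1),
            σ * p ^ (j / 2 + k - 2), σ * p ^ (j / 2 + k - 2)}) :
    ∃ t < 4, p ^ (j + 2 * t) = 1 := by
  have hσ2 : σ * σ = 1 := by rcases hσ with h1 | h1 <;> rw [h1] <;> ring
  have hmem : p ^ (j + k) ∈
      ({σ * p ^ (j / 2 + k - 1), σ * p ^ (j / 2 + k - 1),
        σ * p ^ (j / 2 + k - 2), σ * p ^ (j / 2 + k - 2)} : Multiset F) := by
    rw [← h]; simp
  simp only [Multiset.insert_eq_cons, Multiset.mem_cons, Multiset.mem_singleton] at hmem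
  obtain ⟨m, hm⟩ := hjev
  have hjm : j = 2 * m := by omega
  have hm1 : 1 ≤ m := by omega
  rcases hmem with he | he | he | he
  · refine ⟨1, by norm_num, ?_⟩
    have e1 : p ^ (j + k) = σ * p ^ (j / 2 + k - 1) ↔
        p ^ (j / 2 + k - 1) * p ^ (j / 2 + 1) = p ^ (j / 2 + k - 1) * σ := by
      rw [← pow_add]
      constructor <;> intro hx
      · rw [show j / 2 + k - 1 + (j / 2 + 1) = j + k by omega, hx]; ring
      · rw [show j + k = j / 2 + k - 1 + (j / 2 + 1) by omega, hx]; ring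
    have := mul_left_cancel₀ (pow_ne_zero _ hp) (e1.mp he)
    calc p ^ (j + 2 * 1) = p ^ (j / 2 + 1) * p ^ (j / 2 + 1) := by
          rw [← pow_add]; congr 1; omega
      _ = 1 := by rw [this, hσ2]
  · refine ⟨1, by norm_num, ?_⟩
    have e1 : p ^ (j + k) = σ * p ^ (j / 2 + k - 1) ↔
        p ^ (j / 2 + k - 1) * p ^ (j / 2 + 1) = p ^ (j / 2 + k - 1) * σ := by
      rw [← pow_add]
      constructor <;> intro hx
      · rw [show j / 2 + k - 1 + (j / 2 + 1) = j + k by omega, hx]; ring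
      · rw [show j + k = j / 2 + k - 1 + (j / 2 + 1) by omega, hx]; ring
    have := mul_left_cancel₀ (pow_ne_zero _ hp) (e1.mp he)
    calc p ^ (j + 2 * 1) = p ^ (j / 2 + 1) * p ^ (j / 2 + 1) := by
          rw [← pow_add]; congr 1; omega
      _ = 1 := by rw [this, hσ2]
  · refine ⟨2, by norm_num, ?_⟩
    have e1 : p ^ (j + k) = σ * p ^ (j / 2 + k - 2) ↔
        p ^ (j / 2 + k - 2) * p ^ (j / 2 + 2) = p ^ (j / 2 + k - 2) * σ := by
      rw [← pow_add]
      constructor <;> intro hx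
      · rw [show j / 2 + k - 2 + (j / 2 + 2) = j + k by omega, hx]; ring
      · rw [show j + k = j / 2 + k - 2 + (j / 2 + 2) by omega, hx]; ring
    have := mul_left_cancel₀ (pow_ne_zero _ hp) (e1.mp he)
    calc p ^ (j + 2 * 2) = p ^ (j / 2 + 2) * p ^ (j / 2 + 2) := by
          rw [← pow_add]; congr 1; omega
      _ = 1 := by rw [this, hσ2]
  · refine ⟨2, by norm_num, ?_⟩
    have e1 : p ^ (j + k) = σ * p ^ (j / 2 + k - 2) ↔
        p ^ (j / 2 + k - 2) * p ^ (j / 2 + 2) = p ^ (j / 2 + k - 2) * σ := by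
      rw [← pow_add]
      constructor <;> intro hx
      · rw [show j / 2 + k - 2 + (j / 2 + 2) = j + k by omega, hx]; ring
      · rw [show j + k = j / 2 + k - 2 + (j / 2 + 2) by omega, hx]; ring
    have := mul_left_cancel₀ (pow_ne_zero _ hp) (e1.mp he)
    calc p ^ (j + 2 * 2) = p ^ (j / 2 + 2) * p ^ (j / 2 + 2) := by
          rw [← pow_add]; congr 1; omega
      _ = 1 := by rw [this, hσ2]
end

section
/- Let F be a field of characteristic ≠ 2, p a nonzero element of F, j a positive even integer, and k ≥ 3 an integer; set A = j/2 + k − 1 and B = j/2 + k − 2. Let σ ∈ {1, −1}. If the multiset {p^(j+k), p^(k−3), p^(j+k−1), p^(k−2)} equals the multiset {σ·p^(A+1), σ·p^A, σ·p^B, σ·p^(B−1)} (i.e., the two four-element lists agree up to permutation), then p^(j+2t) = 1 for some t ∈ {0, 1, 2, 3}. -/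
/-- Type IV_c case of Theorem 3.5: if the scaled Satake parameters arising from a local
origin congruence agree (as a multiset) with those of a type IV Borel-induced
representation, then `p^(j+2t) = 1` for some `t ∈ {0,1,2,3}`. -/
theorem localOrigin_typeIV_satake_match
    (F : Type*) [Field F] (h2 : (2 : F) ≠ 0) (p : F) (hp : p ≠ 0)
    (j k : ℕ) (hj : 0 < j) (hjev : Even j) (hk : 3 ≤ k)
    (σ : F) (hσ : σ = 1 ∨ σ = -1)
    (h : ({p ^ (j + k), p ^ (k - 3), p ^ (j + k - 1), p ^ (k - 2)} : Multiset F)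
        = {σ * p ^ (j / 2 + k - 1 + 1), σ * p ^ (j / 2 + k - 1),
            σ * p ^ (j / 2 + k - 2), σ * p ^ (j / 2 + k - 2 - 1)}) :
    ∃ t < 4, p ^ (j + 2 * t) = 1 := by
  obtain ⟨a, ha⟩ := hjev
  have hσ2 : σ * σ = 1 := by rcases hσ with h' | h' <;> simp [h']
  have key : ∀ e t : ℕ, j + k = e + (j / 2 + t) → p ^ (j + k) = σ * p ^ e →
      p ^ (j + 2 * t) = 1 := by
    intro e t he heq
    have hpe : p ^ e ≠ 0 := pow_ne_zero _ hp
    have h1 : p ^ (j / 2 + t) = σ := by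
      apply mul_left_cancel₀ hpe
      rw [← pow_add, ← he, heq, mul_comm]
    have hje : j + 2 * t = (j / 2 + t) + (j / 2 + t) := by omega
    rw [hje, pow_add, h1, hσ2]
  have hmem : p ^ (j + k) ∈ ({σ * p ^ (j / 2 + k - 1 + 1), σ * p ^ (j / 2 + k - 1),
      σ * p ^ (j / 2 + k - 2), σ * p ^ (j / 2 + k - 2 - 1)} : Multiset F) := by
    rw [← h]; simp
  simp only [Multiset.insert_eq_cons, Multiset.mem_cons, Multiset.mem_singleton] at hmem
  rcases hmem with h' | h' | h' | h'
  · exact ⟨0, by norm_num, key _ 0 (by omega) h'⟩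
  · exact ⟨1, by norm_num, key _ 1 (by omega) h'⟩
  · exact ⟨2, by norm_num, key _ 2 (by omega) h'⟩
  · exact ⟨3, by norm_num, key _ 3 (by omega) h'⟩
end

section
/- Let F be a field of characteristic ≠ 2, p a nonzero element of F, j a positive even integer, and k ≥ 3 an integer; set A = j/2 + k − 1 and B = j/2 + k − 2. Let σ ∈ {1, −1}. If the multiset {p^(j+k), p^(k−3), p^(j+k−1), p^(k−2)} equals the multiset {σ·p^A, −σ·p^A, −σ·p^B, σ·p^B} (i.e., the two four-element lists agree up to permutation), then p^(j+2t) = 1 for some t ∈ {0, 1, 2, 3}. -/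
/-- Type V case of Theorem 3.5: if the scaled Satake parameters arising from a local
origin congruence agree (as a multiset) with those of a type V Borel-induced
representation, then `p^(j+2t) = 1` for some `t ∈ {0,1,2,3}`. -/
theorem localOrigin_typeV_satake_match
    (F : Type*) [Field F] (h2 : (2 : F) ≠ 0) (p : F) (hp : p ≠ 0)
    (j k : ℕ) (hj : 0 < j) (hjev : Even j) (hk : 3 ≤ k)
    (σ : F) (hσ : σ = 1 ∨ σ = -1)
    (h : ({p ^ (j + k), p ^ (k - 3), p ^ (j + k - 1), p ^ (k - 2)} : Multiset F)
        = {σ * p ^ (j / 2 + k - 1), -σ * p ^ (j / 2 + k - 1),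
            -σ * p ^ (j / 2 + k - 2), σ * p ^ (j / 2 + k - 2)}) :
    ∃ t < 4, p ^ (j + 2 * t) = 1 := by
  obtain ⟨n, hn⟩ := hjev
  obtain ⟨m, hm⟩ := Nat.exists_eq_add_of_le hk
  have hA : j / 2 + k - 1 = n + m + 2 := by omega
  have hB : j / 2 + k - 2 = n + m + 1 := by omega
  have hC : j + k = 2 * n + m + 3 := by omega
  have hD : k - 3 = m := by omega
  have hE : j + k - 1 = 2 * n + m + 2 := by omega
  have hF : k - 2 = m + 1 := by omega
  rw [hA, hB, hE, hF, hC, hD] at h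
  have hσ2 : σ ^ 2 = 1 := by rcases hσ with h' | h' <;> rw [h'] <;> ring
  -- sum equation
  have hs : p ^ (2 * n + m + 3) + (p ^ m + (p ^ (2 * n + m + 2) + p ^ (m + 1)))
      = σ * p ^ (n + m + 2) + (-σ * p ^ (n + m + 2)
        + (-σ * p ^ (n + m + 1) + σ * p ^ (n + m + 1))) := by
    have := congrArg Multiset.sum h
    simpa using this
  -- sum of squares equation
  have hq : (p ^ (2 * n + m + 3)) ^ 2 + ((p ^ m) ^ 2 + ((p ^ (2 * n + m + 2)) ^ 2
        + (p ^ (m + 1)) ^ 2))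
      = (σ * p ^ (n + m + 2)) ^ 2 + ((-σ * p ^ (n + m + 2)) ^ 2
        + ((-σ * p ^ (n + m + 1)) ^ 2 + (σ * p ^ (n + m + 1)) ^ 2)) := by
    have := congrArg (fun s : Multiset F => (s.map (fun x => x ^ 2)).sum) h
    simpa using this
  have hpm : p ^ m ≠ 0 := pow_ne_zero _ hp
  have e1 : (p + 1) * (p ^ (2 * n + 2) + 1) = 0 := by
    have h1 : p ^ m * ((p + 1) * (p ^ (2 * n + 2) + 1)) = 0 := by
      linear_combination hs
    exact (mul_eq_zero.mp h1).resolve_left hpm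
  have e2 : (p ^ 2 + 1) * (p ^ (2 * n + 2) - 1) ^ 2 = 0 := by
    have h1 : p ^ m * (p ^ m * ((p ^ 2 + 1) * (p ^ (2 * n + 2) - 1) ^ 2)) = 0 := by
      linear_combination hq + (2 * (p ^ (n + m + 2)) ^ 2 + 2 * (p ^ (n + m + 1)) ^ 2) * hσ2
    exact ((mul_eq_zero.mp ((mul_eq_zero.mp h1).resolve_left hpm)).resolve_left hpm)
  rcases mul_eq_zero.mp e2 with h' | h'
  · -- p^2 = -1
    have hp2 : p ^ 2 = -1 := by linear_combination h'
    rcases mul_eq_zero.mp e1 with h'' | h''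
    · -- p = -1, contradiction with p^2 = -1 and 2 ≠ 0
      exfalso
      apply h2
      have : p = -1 := by linear_combination h''
      rw [this] at hp2
      linear_combination hp2
    · -- p^(2n+2) = -1, so p^(2n+4) = 1
      refine ⟨2, by norm_num, ?_⟩
      have : j + 2 * 2 = (2 * n + 2) + 2 := by omega
      rw [this, pow_add]
      have hval : p ^ (2 * n + 2) = -1 := by linear_combination h''
      rw [hval, hp2]; ring
  · -- p^(2n+2) = 1
    refine ⟨1, by norm_num, ?_⟩
    have hval : p ^ (2 * n + 2) = 1 := by
      have := pow_eq_zero_iff (n := 2) (by norm_num) |>.mp h'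
      linear_combination this
    have : j + 2 * 1 = 2 * n + 2 := by omega
    rw [this, hval]
end

section
/- Let F be a field of characteristic ≠ 2, p a nonzero element of F, j a positive even integer, and k ≥ 3 an integer; set A = j/2 + k − 1 and B = j/2 + k − 2. Let u ∈ {1, −1} and let γ be any nonzero element of F. If the multiset {p^(j+k), p^(k−3), p^(j+k−1), p^(k−2)} equals the multiset {γ, p^(j+2k−3)·γ⁻¹, u·p^A, u·p^B} (i.e., the two four-element lists agree up to permutation), then p^(j+2t) = 1 for some t ∈ {0, 1, 2, 3}. -/
private lemma pow_cancel_aux {F : Type*} [Field F] {p : F} (hp : p ≠ 0) {s d : ℕ}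
    (h : p ^ (d + s) = p ^ s) : p ^ d = 1 := by
  rw [pow_add] at h
  exact mul_right_cancel₀ (pow_ne_zero s hp) (by rw [h, one_mul])

/-- Type II_a case of Theorem 3.5: if the scaled Satake parameters arising from a local
origin congruence agree (as a multiset) with those of a type II Borel-induced
representation (with free parameter `γ`), then `p^(j+2t) = 1` for some `t ∈ {0,1,2,3}`. -/
theorem localOrigin_typeII_satake_match
    (F : Type*) [Field F] (h2 : (2 : F) ≠ 0) (p : F) (hp : p ≠ 0)
    (j k : ℕ) (hj : 0 < j) (hjev : Even j) (hk : 3 ≤ k)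
    (u : F) (hu : u = 1 ∨ u = -1) (γ : F) (hγ : γ ≠ 0)
    (h : ({p ^ (j + k), p ^ (k - 3), p ^ (j + k - 1), p ^ (k - 2)} : Multiset F)
        = {γ, p ^ (j + 2 * k - 3) * γ⁻¹, u * p ^ (j / 2 + k - 1), u * p ^ (j / 2 + k - 2)}) :
    ∃ t < 4, p ^ (j + 2 * t) = 1 := by
  have hu2 : u ^ 2 = 1 := by rcases hu with h | h <;> rw [h] <;> ring
  obtain ⟨m, hm⟩ := hjev
  obtain ⟨c, hc⟩ := Nat.exists_eq_add_of_le hk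
  subst hm hc
  have e1 : m + m + (3 + c) = m + m + c + 3 := by omega
  have e2 : 3 + c - 3 = c := by omega
  have e3 : m + m + c + 3 - 1 = m + m + c + 2 := by omega
  have e4 : 3 + c - 2 = c + 1 := by omega
  have e5 : (m + m) / 2 + (3 + c) - 1 = m + c + 2 := by omega
  have e6 : (m + m) / 2 + (3 + c) - 2 = m + c + 1 := by omega
  rw [e1, e2, e3, e4, e5, e6] at h
  have mem : u * p ^ (m + c + 2) ∈
      ({p ^ (m + m + c + 3), p ^ c, p ^ (m + m + c + 2), p ^ (c + 1)} : Multiset F) := by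
    rw [h]
    simp
  simp only [Multiset.insert_eq_cons, Multiset.mem_cons, Multiset.mem_singleton] at mem
  have sq : ∀ x : ℕ, u * p ^ (m + c + 2) = p ^ x →
      p ^ (2 * (m + c + 2)) = p ^ (2 * x) := by
    intro x hx
    have := congrArg (· ^ 2) hx
    simpa [mul_pow, hu2, ← pow_mul, mul_comm] using this
  rcases mem with e | e | e | e
  · -- p^(2m+2c+4) = p^(2m+2m+2c+6) ⇒ p^(2m+2) = 1
    refine ⟨1, by norm_num, ?_⟩
    have := (sq _ e).symm
    rw [show 2 * (m + m + c + 3) = (m + m + 2 * 1) + 2 * (m + c + 2) from by omega] at this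
    exact pow_cancel_aux hp this
  · refine ⟨2, by norm_num, ?_⟩
    have := sq _ e
    rw [show 2 * (m + c + 2) = (m + m + 2 * 2) + 2 * c from by omega] at this
    exact pow_cancel_aux hp this
  · refine ⟨0, by norm_num, ?_⟩
    have := (sq _ e).symm
    rw [show 2 * (m + m + c + 2) = (m + m + 2 * 0) + 2 * (m + c + 2) from by omega] at this
    exact pow_cancel_aux hp this
  · refine ⟨1, by norm_num, ?_⟩
    have := sq _ e
    rw [show 2 * (m + c + 2) = (m + m + 2 * 1) + 2 * (c + 1) from by omega] at this
    exact pow_cancel_aux hp this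
end

section
/- Let F be a field of characteristic ≠ 2, p a nonzero element of F, j a positive even integer, and k ≥ 3 an integer; set A = j/2 + k − 1 and B = j/2 + k − 2. Suppose p^(j+2t) ≠ 1 for every t ∈ {0, 1, 2, 3}. Then for all u, σ ∈ {1, −1} and every nonzero γ ∈ F, the multiset T = {p^(j+k), p^(k−3), p^(j+k−1), p^(k−2)} is not equal to any of the following multisets: {γ, p^(j+2k−3)·γ⁻¹, u·p^A, u·p^B} (type II), {σ·p^(A+1), σ·p^A, σ·p^B, σ·p^(B−1)} (type IV), {σ·p^A, −σ·p^A, −σ·p^B, σ·p^B} (type V), {σ·p^A, σ·p^A, σ·p^B, σ·p^B} (type VI). -/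
private lemma pow_sub_eq_one {F : Type*} [Field F] {p : F} (hp : p ≠ 0)
    {a b : ℕ} (hab : b ≤ a) (h : p ^ a = p ^ b) : p ^ (a - b) = 1 := by
  have hb : p ^ b ≠ 0 := pow_ne_zero _ hp
  apply mul_right_cancel₀ hb
  rw [one_mul, ← pow_add, Nat.sub_add_cancel hab, h]

private lemma not_key {F : Type*} [Field F] {p s : F} (hp : p ≠ 0) (hs : s ^ 2 = 1)
    {e f d : ℕ} (hd : 2 * e = 2 * f + d ∨ 2 * f = 2 * e + d)
    (hne : p ^ d ≠ 1) (h : p ^ f = s * p ^ e) : False := by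
  have h2 : p ^ (2 * f) = p ^ (2 * e) := by
    have hsq : (p ^ f) ^ 2 = (s * p ^ e) ^ 2 := by rw [h]
    rwa [mul_pow, hs, one_mul, ← pow_mul, ← pow_mul, mul_comm f 2, mul_comm e 2] at hsq
  rcases hd with hd | hd
  · have := pow_sub_eq_one hp (by omega : 2 * f ≤ 2 * e) h2.symm
    rw [show 2 * e - 2 * f = d by omega] at this
    exact hne this
  · have := pow_sub_eq_one hp (by omega : 2 * e ≤ 2 * f) h2
    rw [show 2 * f - 2 * e = d by omega] at this
    exact hne this

private lemma main_step {F : Type*} [Field F] {p s : F} (hp : p ≠ 0) (hs : s ^ 2 = 1)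
    {j k : ℕ} (hj : 0 < j) (hj2 : j % 2 = 0) (hk : 3 ≤ k)
    (hne : ∀ t < 4, p ^ (j + 2 * t) ≠ 1)
    (h : s * p ^ (j / 2 + k - 1) ∈
      ({p ^ (j + k), p ^ (k - 3), p ^ (j + k - 1), p ^ (k - 2)} : Multiset F)) : False := by
  simp only [Multiset.insert_eq_cons, Multiset.mem_cons, Multiset.mem_singleton] at h
  rcases h with h | h | h | h
  · exact not_key hp hs (d := j + 2 * 1) (Or.inr (by omega)) (hne 1 (by norm_num)) h.symm
  · exact not_key hp hs (d := j + 2 * 2) (Or.inl (by omega)) (hne 2 (by norm_num)) h.symm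
  · exact not_key hp hs (d := j + 2 * 0) (Or.inr (by omega)) (hne 0 (by norm_num)) h.symm
  · exact not_key hp hs (d := j + 2 * 1) (Or.inl (by omega)) (hne 1 (by norm_num)) h.symm

/-- Theorem 3.5 (algebraic content): if `p^(j+2t) ≠ 1` for `t = 0,1,2,3`, then the scaled
Satake-parameter multiset `T` arising from a local origin congruence cannot match that of a
Borel-induced representation of type II, IV, V or VI with trivial central character. -/
theorem localOrigin_satake_not_type_II_IV_V_VI
    (F : Type*) [Field F] (h2 : (2 : F) ≠ 0) (p : F) (hp : p ≠ 0)
    (j k : ℕ) (hj : 0 < j) (hjev : Even j) (hk : 3 ≤ k)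
    (hne : ∀ t < 4, p ^ (j + 2 * t) ≠ 1) :
    ∀ u σ : F, u = 1 ∨ u = -1 → σ = 1 ∨ σ = -1 → ∀ γ : F, γ ≠ 0 →
      ({p ^ (j + k), p ^ (k - 3), p ^ (j + k - 1), p ^ (k - 2)} : Multiset F)
          ≠ {γ, p ^ (j + 2 * k - 3) * γ⁻¹, u * p ^ (j / 2 + k - 1), u * p ^ (j / 2 + k - 2)}
      ∧ ({p ^ (j + k), p ^ (k - 3), p ^ (j + k - 1), p ^ (k - 2)} : Multiset F)
          ≠ {σ * p ^ (j / 2 + k - 1 + 1), σ * p ^ (j / 2 + k - 1),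
              σ * p ^ (j / 2 + k - 2), σ * p ^ (j / 2 + k - 2 - 1)}
      ∧ ({p ^ (j + k), p ^ (k - 3), p ^ (j + k - 1), p ^ (k - 2)} : Multiset F)
          ≠ {σ * p ^ (j / 2 + k - 1), -σ * p ^ (j / 2 + k - 1),
              -σ * p ^ (j / 2 + k - 2), σ * p ^ (j / 2 + k - 2)}
      ∧ ({p ^ (j + k), p ^ (k - 3), p ^ (j + k - 1), p ^ (k - 2)} : Multiset F)
          ≠ {σ * p ^ (j / 2 + k - 1), σ * p ^ (j / 2 + k - 1),
              σ * p ^ (j / 2 + k - 2), σ * p ^ (j / 2 + k - 2)} := by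
  have hj2 : j % 2 = 0 := Nat.even_iff.mp hjev
  intro u σ hu hσ γ hγ
  have hu2 : u ^ 2 = 1 := by rcases hu with rfl | rfl <;> norm_num
  have hσ2 : σ ^ 2 = 1 := by rcases hσ with rfl | rfl <;> norm_num
  refine ⟨fun h => ?_, fun h => ?_, fun h => ?_, fun h => ?_⟩
  · refine main_step hp hu2 hj hj2 hk hne ?_
    rw [h]; simp
  · refine main_step hp hσ2 hj hj2 hk hne ?_
    rw [h]; simp
  · refine main_step hp hσ2 hj hj2 hk hne ?_
    rw [h]; simp
  · refine main_step hp hσ2 hj hj2 hk hne ?_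
    rw [h]; simp
end
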